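/- Let α > 1, weights 1 ≥ γ_1 ≥ … ≥ γ_d > 0, N ≥ 1, and q > 1/α. Then |A_d(N)| ≤ N^q ∏_{j=1}^d (1 + 2ζ(αq) γ_j^q), where ζ is the Riemann zeta function and A_d(N) := {h ∈ ℤ^d : ∏_{j=1}^d max(1, γ_j^{-1}|h_j|^α) ≤ N}. -/

import Mathlib

noncomputable def realZeta (s : ℝ) : ℝ := ∑' n : ℕ, ((n : ℝ) + 1) ^ (-s)

/-!
Rankin's trick: every `h` in the Korobov set satisfies `1 ≤ (N / r(h))^q`, so its cardinality is at
most `N^q ∑ r(h)^{-q}`. Since `r(h)` is a product of one-dimensional factors, this sum is dominated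
by the product over the coordinates of the full sums `∑_{x ∈ ℤ} max(1, γ_j⁻¹|x|^α)^{-q}`, each of
which is at most `1 + γ_j^q ∑_{x ≠ 0} |x|^{-αq} = 1 + 2 ζ(αq) γ_j^q`.
-/

open Finset

theorem summable_nat_add_one_rpow_neg {s : ℝ} (hs : 1 < s) :
    Summable fun n : ℕ => ((n : ℝ) + 1) ^ (-s) := by
  have := (summable_nat_add_iff 1).mpr (Real.summable_nat_rpow.mpr (by linarith : -s < -1))
  simpa only [Nat.cast_add, Nat.cast_one] using this

theorem hasSum_realZeta {s : ℝ} (hs : 1 < s) :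
    HasSum (fun n : ℕ => ((n : ℝ) + 1) ^ (-s)) (realZeta s) :=
  (summable_nat_add_one_rpow_neg hs).hasSum

/-- The `n = 0` term is `0 ^ (-s) = 0`, so this is the sum over `n ≠ 0`. -/
theorem hasSum_int_abs_rpow_neg {s : ℝ} (hs : 1 < s) :
    HasSum (fun n : ℤ => |(n : ℝ)| ^ (-s)) (2 * realZeta s) := by
  have hpos : HasSum (fun n : ℕ => |(((n : ℤ) + 1 : ℤ) : ℝ)| ^ (-s)) (realZeta s) :=
    (hasSum_realZeta hs).congr_fun fun n => by
      rw [Int.cast_add, Int.cast_natCast, Int.cast_one, abs_of_nonneg (by positivity)]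
  have hneg : HasSum (fun n : ℕ => |((-((n : ℤ) + 1) : ℤ) : ℝ)| ^ (-s)) (realZeta s) :=
    hpos.congr_fun fun n => by rw [Int.cast_neg, abs_neg]
  have := HasSum.of_add_one_of_neg_add_one (f := fun n : ℤ => |(n : ℝ)| ^ (-s)) hpos hneg
  rwa [Int.cast_zero, abs_zero, Real.zero_rpow (by linarith), add_zero, ← two_mul] at this

noncomputable def korobovFactor (α g : ℝ) (x : ℤ) : ℝ := max 1 (g⁻¹ * |(x : ℝ)| ^ α)

section korobovFactor

variable {α g : ℝ}

theorem one_le_korobovFactor (x : ℤ) : 1 ≤ korobovFactor α g x := le_max_left _ _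

theorem korobovFactor_pos (x : ℤ) : 0 < korobovFactor α g x :=
  one_pos.trans_le (one_le_korobovFactor x)

theorem korobovFactor_rpow_nonneg (x : ℤ) (r : ℝ) : 0 ≤ korobovFactor α g x ^ r :=
  Real.rpow_nonneg (korobovFactor_pos x).le r

theorem korobovFactor_zero (hα : α ≠ 0) : korobovFactor α g 0 = 1 := by
  simp [korobovFactor, Real.zero_rpow hα]

theorem korobovFactor_rpow_neg_le {q : ℝ} (hg : 0 < g) (hq : 0 ≤ q) {x : ℤ} (hx : x ≠ 0) :
    korobovFactor α g x ^ (-q) ≤ g ^ q * |(x : ℝ)| ^ (-(α * q)) := by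
  have hx' : 0 < |(x : ℝ)| ^ α := Real.rpow_pos_of_pos (by positivity) α
  calc korobovFactor α g x ^ (-q) ≤ (g⁻¹ * |(x : ℝ)| ^ α) ^ (-q) :=
        Real.rpow_le_rpow_of_nonpos (by positivity) (le_max_right _ _) (by linarith)
    _ = g ^ q * |(x : ℝ)| ^ (-(α * q)) := by
        rw [Real.mul_rpow (by positivity) hx'.le, Real.inv_rpow hg.le, ← Real.rpow_neg hg.le,
          neg_neg, ← Real.rpow_mul (abs_nonneg _), mul_neg]

theorem sum_korobovFactor_rpow_neg_le {q : ℝ} (hα : 0 < α) (hαq : 1 < α * q) (hg : 0 < g)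
    (T : Finset ℤ) :
    ∑ x ∈ T, korobovFactor α g x ^ (-q) ≤ 1 + 2 * realZeta (α * q) * g ^ q := by
  have hq : 0 ≤ q := (pos_of_mul_pos_right (by linarith) hα.le).le
  have hsum : HasSum (fun x : ℤ => (if x = 0 then 1 else 0) + g ^ q * |(x : ℝ)| ^ (-(α * q)))
      (1 + 2 * realZeta (α * q) * g ^ q) := by
    convert (hasSum_ite_eq 0 (1 : ℝ)).add ((hasSum_int_abs_rpow_neg hαq).mul_left (g ^ q))
      using 1
    ring
  refine (sum_le_sum fun x _ => ?_).trans <|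
    sum_le_hasSum T (fun x _ => add_nonneg (by split_ifs <;> norm_num) (by positivity)) hsum
  rcases eq_or_ne x 0 with rfl | hx
  · rw [korobovFactor_zero hα.ne', Real.one_rpow, if_pos rfl]
    exact le_add_of_nonneg_right (by positivity)
  · simpa [hx] using korobovFactor_rpow_neg_le hg hq hx

end korobovFactor

theorem card_le_rpow_mul_sum_rpow_neg {κ : Type*} (A : Finset κ) (r : κ → ℝ) {N q : ℝ}
    (hq : 0 ≤ q) (hr : ∀ h ∈ A, 0 < r h) (hrN : ∀ h ∈ A, r h ≤ N) :
    (#A : ℝ) ≤ N ^ q * ∑ h ∈ A, r h ^ (-q) := by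
  rw [card_eq_sum_ones, Nat.cast_sum, mul_sum]
  refine sum_le_sum fun h hh => ?_
  rw [Real.rpow_neg (hr h hh).le, ← div_eq_mul_inv, Nat.cast_one,
    one_le_div (Real.rpow_pos_of_pos (hr h hh) q)]
  exact Real.rpow_le_rpow (hr h hh).le (hrN h hh) hq

theorem sum_prod_le_prod_sum_image {ι β R : Type*} [Fintype ι] [DecidableEq ι] [DecidableEq β]
    [CommSemiring R] [PartialOrder R] [IsOrderedRing R]
    (A : Finset (ι → β)) (f : ι → β → R) (hf : ∀ i x, 0 ≤ f i x) :
    ∑ h ∈ A, ∏ i, f i (h i) ≤ ∏ i, ∑ x ∈ A.image (· i), f i x := by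
  rw [prod_univ_sum]
  exact sum_le_sum_of_subset_of_nonneg
    (fun h hh => Fintype.mem_piFinset.mpr fun i => mem_image_of_mem _ hh)
    fun _ _ _ => prod_nonneg fun i _ => hf i _

theorem korobov_card_upper_bound_general (d : ℕ) (α : ℝ) (hα : 1 < α)
    (γ : Fin d → ℝ) (hγpos : ∀ j, 0 < γ j)
    (N : ℝ) (hN : 1 ≤ N) (q : ℝ) (hq : 1 / α < q)
    (hA : {h : Fin d → ℤ | (∏ j, max 1 ((γ j)⁻¹ * |(h j : ℝ)| ^ α)) ≤ N}.Finite) :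
    (hA.toFinset.card : ℝ) ≤ N ^ q * ∏ j, (1 + 2 * realZeta (α * q) * γ j ^ q) := by
  have hα0 : 0 < α := by linarith
  have hαq : 1 < α * q := by rwa [div_lt_iff₀ hα0, mul_comm] at hq
  have hq0 : 0 ≤ q := le_trans (by positivity) hq.le
  have hNq : 0 ≤ N ^ q := Real.rpow_nonneg (by linarith) q
  let F : Fin d → ℤ → ℝ := fun j => korobovFactor α (γ j)
  calc (hA.toFinset.card : ℝ)
      ≤ N ^ q * ∑ h ∈ hA.toFinset, (∏ j, F j (h j)) ^ (-q) :=
        card_le_rpow_mul_sum_rpow_neg _ _ hq0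
          (fun h _ => prod_pos fun j _ => korobovFactor_pos _) fun h hh => hA.mem_toFinset.mp hh
    _ = N ^ q * ∑ h ∈ hA.toFinset, ∏ j, F j (h j) ^ (-q) := by
        congr 1
        exact sum_congr rfl fun h _ =>
          (Real.finsetProd_rpow _ _ (fun j _ => (korobovFactor_pos _).le) _).symm
    _ ≤ N ^ q * ∏ j, ∑ x ∈ hA.toFinset.image (· j), F j x ^ (-q) :=
        mul_le_mul_of_nonneg_left (sum_prod_le_prod_sum_image _ _
          fun j x => korobovFactor_rpow_nonneg x _) hNq
    _ ≤ N ^ q * ∏ j, (1 + 2 * realZeta (α * q) * γ j ^ q) :=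
        mul_le_mul_of_nonneg_left (prod_le_prod
          (fun j _ => sum_nonneg fun x _ => korobovFactor_rpow_nonneg x _)
          fun j _ => sum_korobovFactor_rpow_neg_le hα0 hαq (hγpos j) _) hNq

theorem korobov_card_upper_bound (d : ℕ) (α : ℝ) (hα : 1 < α)
    (γ : Fin d → ℝ) (hγpos : ∀ j, 0 < γ j) (hγ1 : ∀ j, γ j ≤ 1)
    (hγmono : ∀ i j : Fin d, i ≤ j → γ j ≤ γ i)
    (N : ℝ) (hN : 1 ≤ N) (q : ℝ) (hq : 1 / α < q)
    (hA : {h : Fin d → ℤ | (∏ j, max 1 ((γ j)⁻¹ * |(h j : ℝ)| ^ α)) ≤ N}.Finite) :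
    (hA.toFinset.card : ℝ) ≤ N ^ q * ∏ j, (1 + 2 * realZeta (α * q) * γ j ^ q) :=
  korobov_card_upper_bound_general d α hα γ hγpos N hN q hq hA
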